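/- arXiv:2204.12599 — 3 statements merged into one kernel-verified Lean document; each statement's English description precedes it below -/
import Mathlib

section
/- For any peak Λ ≤ 1/2, in any swap Schelling game (G,b,Λ), no profitable swap can occur between two agents occupying adjacent nodes such that one of them is below the peak and the other is above the peak. -/
/-!
Swapping two adjacent, differently colored agents turns their fractions `a = f(v) < Λ` and
`d = f(w) > Λ` into `1 - d` and `1 - a`. The utility is strictly decreasing on `[Λ, 1]`, which
contains `d` and, because `Λ ≤ 1/2`, also `1 - a`; so the agent leaving `w` gains only if
`1 - a < d`. But then `1 - d < a < Λ`, and the agent leaving `v` loses, since the utility is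
strictly increasing on `[0, Λ]`.
-/

open Finset

namespace SwapSchelling

variable {V : Type*} [Fintype V] [DecidableEq V]

open scoped Classical in
/-- The closed neighborhood `N[v]` of a node `v` in `G`, as a `Finset`. -/
noncomputable def closedNbhd (G : SimpleGraph V) (v : V) : Finset V :=
  univ.filter (fun u => u = v ∨ G.Adj v u)

open scoped Classical in
/-- The degree `δ(v)` of a node `v` in `G`. -/
noncomputable def deg (G : SimpleGraph V) (v : V) : ℕ :=
  (univ.filter (fun u => G.Adj v u)).card

/-- The maximum degree `Δ(G)`. -/
noncomputable def maxDeg (G : SimpleGraph V) : ℕ := univ.sup (deg G)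

/-- The minimum degree `δ(G)`. -/
noncomputable def minDeg (G : SimpleGraph V) : ℕ := sInf (Set.range (deg G))

open scoped Classical in
/-- `frac G c v` is the fraction of nodes in the closed neighborhood of `v` that have
the same color as `v` (that is, `f_i(σ)` for the agent `i` occupying node `v`). -/
noncomputable def frac (G : SimpleGraph V) (c : V → Bool) (v : V) : ℝ :=
  (((closedNbhd G v).filter (fun u => c u = c v)).card : ℝ) / ((closedNbhd G v).card : ℝ)

/-- The coloring obtained from `c` after the agents on nodes `v` and `w` swap positions. -/
def swapColor (c : V → Bool) (v w : V) : V → Bool := c ∘ Equiv.swap v w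

/-- A single-peaked utility function `p` with peak at `Λ`: `p 0 = 0`, `p` is strictly
increasing on `[0,Λ]`, `p Λ = 1`, and `p x = p (Λ(1-x)/(1-Λ))` for `x ∈ [Λ,1]`. -/
structure IsSinglePeaked (p : ℝ → ℝ) (Λ : ℝ) : Prop where
  peak_mem : Λ ∈ Set.Ioo (0 : ℝ) 1
  map_zero : p 0 = 0
  strictMonoOn : StrictMonoOn p (Set.Icc 0 Λ)
  map_peak : p Λ = 1
  symm : ∀ x ∈ Set.Icc Λ 1, p x = p (Λ * (1 - x) / (1 - Λ))

/-- A strategy profile: a 2-coloring of the nodes with exactly `b` blue (`true`) nodes. -/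
def IsProfile (c : V → Bool) (b : ℕ) : Prop :=
  (univ.filter (fun v => c v = true)).card = b

/-- The structural data of a swap Schelling game `(G, b, Λ)` with utility function `p`:
`G` is connected, there are `b` blue agents with `1 ≤ b ≤ n/2`, and `p` is a
single-peaked utility function with peak `Λ`. -/
structure IsGame (G : SimpleGraph V) (b : ℕ) (Λ : ℝ) (p : ℝ → ℝ) : Prop where
  connected : G.Connected
  one_le_b : 1 ≤ b
  b_le_half : 2 * b ≤ Fintype.card V
  singlePeaked : IsSinglePeaked p Λ

/-- The swap of the two (differently colored) agents occupying nodes `v` and `w`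
is profitable: both agents strictly increase their utility. -/
def ProfitableSwap (G : SimpleGraph V) (p : ℝ → ℝ) (c : V → Bool) (v w : V) : Prop :=
  c v ≠ c w ∧
  p (frac G (swapColor c v w) w) > p (frac G c v) ∧
  p (frac G (swapColor c v w) v) > p (frac G c w)

/-- A swap equilibrium: no profitable swap exists. -/
def IsSwapEquilibrium (G : SimpleGraph V) (p : ℝ → ℝ) (c : V → Bool) : Prop :=
  ∀ v w, ¬ ProfitableSwap G p c v w

open scoped Classical in
/-- The degree of integration: the number of non-segregated agents. -/
noncomputable def DoI (G : SimpleGraph V) (c : V → Bool) : ℕ :=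
  (univ.filter (fun v => frac G c v ≠ 1)).card

open scoped Classical in
/-- The number of monochromatic edges of `G` under the coloring `c`. -/
noncomputable def Phi (G : SimpleGraph V) (c : V → Bool) : ℕ :=
  (G.edgeFinset.filter (fun e => ∀ u ∈ e, ∀ w ∈ e, c u = c w)).card

open scoped Classical in
/-- The number of edges of `G`. -/
noncomputable def numEdges (G : SimpleGraph V) : ℕ :=
  (univ.filter (fun e : Sym2 V => e ∈ G.edgeSet)).card

/-- A finset of nodes is an independent set of `G`. -/
def IsIndepSet (G : SimpleGraph V) (s : Finset V) : Prop :=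
  ∀ u ∈ s, ∀ w ∈ s, ¬ G.Adj u w

open scoped Classical in
/-- The independence number `α(G)`. -/
noncomputable def indepNum (G : SimpleGraph V) : ℕ :=
  univ.sup (fun s : Finset V => if IsIndepSet G s then s.card else 0)

open scoped Classical in
/-- The degree of `v` inside the subgraph of `G` induced by the node set `s`. -/
noncomputable def degOn (G : SimpleGraph V) (s : Finset V) (v : V) : ℕ :=
  (s.filter (fun u => G.Adj v u)).card

section Neighborhoods

variable {G : SimpleGraph V}

lemma mem_closedNbhd {v u : V} : u ∈ closedNbhd G v ↔ u = v ∨ G.Adj v u := by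
  simp [closedNbhd]

lemma closedNbhd_card_pos (v : V) : 0 < (closedNbhd G v).card :=
  Finset.card_pos.2 ⟨v, mem_closedNbhd.2 (Or.inl rfl)⟩

lemma frac_nonneg (c : V → Bool) (v : V) : 0 ≤ frac G c v := by
  unfold frac; positivity

lemma frac_le_one (c : V → Bool) (v : V) : frac G c v ≤ 1 := by
  rw [frac, div_le_one (by exact_mod_cast closedNbhd_card_pos v)]
  exact_mod_cast Finset.card_filter_le _ _

lemma swap_mapsTo_closedNbhd {v w : V} (hadj : G.Adj v w) :
    Set.MapsTo (Equiv.swap v w) (closedNbhd G w) (closedNbhd G w) := by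
  intro u hu
  rcases eq_or_ne u v with rfl | hv
  · simp [mem_closedNbhd]
  rcases eq_or_ne u w with rfl | hw
  · simp [mem_closedNbhd, hadj.symm]
  rwa [Equiv.swap_apply_of_ne_of_ne hv hw]

lemma frac_swapColor_right {c : V → Bool} {v w : V} (hadj : G.Adj v w) (hne : c v ≠ c w) :
    frac G (swapColor c v w) w = 1 - frac G c w := by
  have hcolor : ∀ u, swapColor c v w u = swapColor c v w w ↔ ¬ c (Equiv.swap v w u) = c w := by
    intro u
    have hcv : c v = !c w := by revert hne; cases c v <;> cases c w <;> simp
    simp only [swapColor, Function.comp_apply, Equiv.swap_apply_right, hcv]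
    cases c (Equiv.swap v w u) <;> cases c w <;> simp
  -- `swap v w` permutes `N[w]`, carrying the nodes that now agree with `w` onto those that
  -- disagreed with `w` before.
  have hcard : ((closedNbhd G w).filter (fun u => swapColor c v w u = swapColor c v w w)).card
      = ((closedNbhd G w).filter (fun u => ¬ c u = c w)).card := by
    simp only [hcolor]
    have hmaps := swap_mapsTo_closedNbhd hadj
    refine Finset.card_nbij' (Equiv.swap v w) (Equiv.swap v w) ?_ ?_ ?_ ?_
    · intro u hu
      simp only [coe_filter, Set.mem_ofPred_eq] at hu ⊢
      exact ⟨hmaps hu.1, hu.2⟩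
    · intro u hu
      simp only [coe_filter, Set.mem_ofPred_eq, Equiv.swap_apply_self] at hu ⊢
      exact ⟨hmaps hu.1, hu.2⟩
    · exact fun u _ => Equiv.swap_apply_self v w u
    · exact fun u _ => Equiv.swap_apply_self v w u
  have hsplit := Finset.card_filter_add_card_filter_not (s := closedNbhd G w) (fun u => c u = c w)
  have hpos : (0 : ℝ) < (closedNbhd G w).card := by exact_mod_cast closedNbhd_card_pos w
  rw [frac, frac, hcard, eq_sub_iff_add_eq, ← add_div, div_eq_one_iff_eq hpos.ne']
  exact_mod_cast (add_comm _ _).trans hsplit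

lemma frac_swapColor_left {c : V → Bool} {v w : V} (hadj : G.Adj v w) (hne : c v ≠ c w) :
    frac G (swapColor c v w) v = 1 - frac G c v := by
  rw [← frac_swapColor_right hadj.symm hne.symm, swapColor, swapColor, Equiv.swap_comm]

end Neighborhoods

namespace IsSinglePeaked

variable {p : ℝ → ℝ} {Λ : ℝ}

lemma strictAntiOn (hp : IsSinglePeaked p Λ) : StrictAntiOn p (Set.Icc Λ 1) := by
  obtain ⟨hΛ0, hΛ1⟩ := hp.peak_mem
  have hreflect : ∀ x ∈ Set.Icc Λ 1, Λ * (1 - x) / (1 - Λ) ∈ Set.Icc 0 Λ := by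
    rintro x ⟨hΛx, hx1⟩
    constructor
    · exact div_nonneg (mul_nonneg hΛ0.le (by linarith)) (by linarith)
    · rw [div_le_iff₀ (by linarith)]; nlinarith
  intro x hx y hy hxy
  rw [hp.symm x hx, hp.symm y hy]
  refine hp.strictMonoOn (hreflect y hy) (hreflect x hx) ?_
  gcongr

lemma map_one_sub_lt (hp : IsSinglePeaked p Λ) (hΛ : Λ ≤ 1 / 2) {a d : ℝ}
    (ha0 : 0 ≤ a) (ha : a < Λ) (hd : Λ < d) (hd1 : d ≤ 1) (hgain : p d < p (1 - a)) :
    p (1 - d) < p a := by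
  have hlt : 1 - a < d :=
    (hp.strictAntiOn.lt_iff_gt ⟨hd.le, hd1⟩ ⟨by linarith, by linarith⟩).1 hgain
  exact hp.strictMonoOn ⟨by linarith, by linarith⟩ ⟨ha0, ha.le⟩ (by linarith)

end IsSinglePeaked

theorem no_profitable_swap_adjacent_different_sides_general
    {V : Type*} [Fintype V] [DecidableEq V] (G : SimpleGraph V) (b : ℕ) (Λ : ℝ) (p : ℝ → ℝ)
    (hgame : IsGame G b Λ p) (hΛ : Λ ≤ 1 / 2)
    (c : V → Bool) (v w : V) (hadj : G.Adj v w)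
    (hv : frac G c v < Λ) (hw : Λ < frac G c w) :
    ¬ ProfitableSwap G p c v w := by
  rintro ⟨hne, hgain_v, hgain_w⟩
  rw [frac_swapColor_right hadj hne] at hgain_v
  rw [frac_swapColor_left hadj hne] at hgain_w
  exact (hgame.singlePeaked.map_one_sub_lt hΛ (frac_nonneg c v) hv hw (frac_le_one c w)
    hgain_w).not_gt hgain_v

/-- For any peak `Λ ≤ 1/2`, no profitable swap can occur between two agents
occupying adjacent nodes such that one is below the peak and the other above the peak. -/
theorem no_profitable_swap_adjacent_different_sides
    {V : Type*} [Fintype V] [DecidableEq V] (G : SimpleGraph V) (b : ℕ) (Λ : ℝ) (p : ℝ → ℝ)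
    (hgame : IsGame G b Λ p) (hΛ : Λ ≤ 1 / 2)
    (c : V → Bool) (hc : IsProfile c b) (v w : V) (hadj : G.Adj v w)
    (hv : frac G c v < Λ) (hw : Λ < frac G c w) :
    ¬ ProfitableSwap G p c v w :=
  no_profitable_swap_adjacent_different_sides_general G b Λ p hgame hΛ c v w hadj hv hw

end SwapSchelling
end

section
/- For any peak Λ ≤ 1/2 and any swap Schelling game (G,b,Λ) on an almost regular graph G, every profitable swap strictly decreases the number Φ of monochromatic edges by at least 1; consequently, starting from any strategy profile, every sequence of profitable swaps is finite, has length at most m = |E|, and ends in a swap equilibrium. -/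
/-!
When the differently coloured agents on `v` and `w` swap, only edges at `v` and `w` change,
and `Φ` drops by `s_v + s_w - s'_v - s'_w`, where `s` and `s'` count like neighbours before and
after the swap. For `Λ ≤ 1/2` the utility of an agent with fraction `f` of like neighbours can
only grow if its new fraction is below `f` or below `1 - f`. The two agents cannot both take the
second option: `1 - f` at `v` is at most the fraction of the agent arriving at `v`, and
symmetrically at `w`. So one agent strictly lowers its fraction; as the closed neighbourhoods of
`v` and `w` differ in size by at most one, this makes `Φ` drop by at least one. Since `Φ ≤ m`, the
finite improvement property follows.
-/

open Finset

section Potential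

variable {α : Type*} {r : α → α → Prop} {Φ : α → ℕ}

theorem chain_length_le_of_potential (hΦ : ∀ a b, r a b → Φ b + 1 ≤ Φ a) {L : ℕ}
    {s : ℕ → α} (hs : ∀ t < L, r (s t) (s (t + 1))) : L ≤ Φ (s 0) := by
  suffices h : ∀ t ≤ L, Φ (s t) + t ≤ Φ (s 0) by
    have := h L le_rfl
    omega
  intro t ht
  induction t with
  | zero => simp
  | succ t ih =>
    have hstep := hΦ _ _ (hs t ht)
    have := ih (by omega)
    omega

theorem exists_chain_to_terminal_of_potential (hΦ : ∀ a b, r a b → Φ b + 1 ≤ Φ a) (a : α) :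
    ∃ (L : ℕ) (s : ℕ → α), s 0 = a ∧ L ≤ Φ a ∧ (∀ t < L, r (s t) (s (t + 1))) ∧
      ∀ b, ¬ r (s L) b := by
  induction hn : Φ a using Nat.strong_induction_on generalizing a with
  | _ n ih =>
  rcases em (∀ b, ¬ r a b) with hterm | hstep
  · exact ⟨0, fun _ => a, rfl, Nat.zero_le _, by simp, hterm⟩
  obtain ⟨b, hab⟩ := not_forall_not.1 hstep
  have hdrop := hΦ a b hab
  obtain ⟨L, s, hs0, hL, hs, hsL⟩ := ih (Φ b) (by omega) b rfl
  refine ⟨L + 1, fun t => Nat.casesOn t a s, rfl, by omega, ?_, hsL⟩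
  rintro (_ | t) ht
  · simpa [hs0] using hab
  · exact hs t (by omega)

end Potential

theorem Nat.lt_of_mul_lt_mul_of_le {a b m n : ℕ} (h : a * n < b * m) (hmn : m ≤ n) : a < b :=
  Nat.lt_of_mul_lt_mul_right (h.trans_le (Nat.mul_le_mul_left b hmn))

theorem Nat.le_of_mul_lt_mul_of_le_succ {a b m n : ℕ} (h : a * n < b * m) (hmn : m ≤ n + 1)
    (hbn : b ≤ n) : a ≤ b := by
  refine Nat.lt_succ_iff.1 (Nat.lt_of_mul_lt_mul_right (a := n) ?_)
  calc a * n < b * m := h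
    _ ≤ b * (n + 1) := Nat.mul_le_mul_left b hmn
    _ ≤ (b + 1) * n := by nlinarith

namespace SwapSchelling

section SwapColor

variable {α : Type*} [DecidableEq α] {c : α → Bool} {v w : α}

theorem swapColor_comm (c : α → Bool) (v w : α) : swapColor c v w = swapColor c w v := by
  rw [swapColor, swapColor, Equiv.swap_comm]

@[simp]
theorem swapColor_apply_left : swapColor c v w v = c w := by
  simp [swapColor]

@[simp]
theorem swapColor_apply_right : swapColor c v w w = c v := by
  simp [swapColor]

theorem swapColor_apply_of_ne_of_ne {u : α} (hv : u ≠ v) (hw : u ≠ w) :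
    swapColor c v w u = c u := by
  simp [swapColor, Equiv.swap_apply_of_ne_of_ne hv hw]

end SwapColor

namespace IsSinglePeaked

variable {p : ℝ → ℝ} {Λ : ℝ}

theorem fold_mem_Icc (hp : IsSinglePeaked p Λ) {x : ℝ} (hx : x ∈ Set.Icc Λ 1) :
    Λ * (1 - x) / (1 - Λ) ∈ Set.Icc 0 Λ := by
  obtain ⟨hΛ0, hΛ1⟩ := hp.peak_mem
  have h1Λ : 0 < 1 - Λ := by linarith
  constructor
  · exact div_nonneg (mul_nonneg hΛ0.le (by linarith [hx.2])) h1Λ.le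
  · rw [div_le_iff₀ h1Λ]
    nlinarith [hx.1]

theorem lt_or_lt_one_sub_of_lt (hp : IsSinglePeaked p Λ) (hΛ : Λ ≤ 1 / 2) {x y : ℝ}
    (hx : x ∈ Set.Icc 0 1) (hy : y ∈ Set.Icc 0 1) (h : p x < p y) : y < x ∨ y < 1 - x := by
  by_contra! hxy
  obtain ⟨hΛ0, hΛ1⟩ := hp.peak_mem
  have hyΛ : y ∈ Set.Icc Λ 1 := ⟨by linarith, hy.2⟩
  have hmono := hp.strictMonoOn.monotoneOn
  rw [hp.symm y hyΛ] at h
  rcases le_total x Λ with hxΛ | hxΛ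
  · have hfold : Λ * (1 - y) / (1 - Λ) ≤ x := by
      rw [div_le_iff₀ (by linarith)]
      nlinarith [mul_nonneg (sub_nonneg.2 hy.2) (by linarith : (0 : ℝ) ≤ 1 - 2 * Λ),
        mul_nonneg (by linarith : (0 : ℝ) ≤ 1 - Λ) (by linarith : 0 ≤ x - (1 - y))]
    exact (hmono (hp.fold_mem_Icc hyΛ) ⟨hx.1, hxΛ⟩ hfold).not_gt h
  · have hxΛ' : x ∈ Set.Icc Λ 1 := ⟨hxΛ, hx.2⟩
    rw [hp.symm x hxΛ'] at h
    have hfold : Λ * (1 - y) / (1 - Λ) ≤ Λ * (1 - x) / (1 - Λ) := by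
      gcongr
      linarith
    exact (hmono (hp.fold_mem_Icc hyΛ) (hp.fold_mem_Icc hxΛ') hfold).not_gt h

end IsSinglePeaked

variable {V : Type*} [Fintype V]

section Counting

open scoped Classical

variable {G : SimpleGraph V} {c : V → Bool}

variable (G c) in
noncomputable def sameColorDeg (v : V) : ℕ :=
  #{u | G.Adj v u ∧ c u = c v}

theorem sameColorDeg_le_deg (v : V) : sameColorDeg G c v ≤ deg G v :=
  card_le_card fun u hu => by simp_all

theorem deg_le_deg_add_one (hreg : maxDeg G ≤ minDeg G + 1) (v w : V) :
    deg G v ≤ deg G w + 1 :=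
  (le_sup (mem_univ v)).trans <|
    hreg.trans (Nat.add_le_add_right (Nat.sInf_le (Set.mem_range_self w)) 1)

variable (c) in
def IsMonochromatic (e : Sym2 V) : Prop :=
  ∀ a ∈ e, ∀ b ∈ e, c a = c b

variable [DecidableEq V]

theorem filter_monochromatic_mem_eq_image (v : V) :
    {e ∈ G.edgeFinset | IsMonochromatic c e ∧ v ∈ e}
      = ({u | G.Adj v u ∧ c u = c v} : Finset V).image (fun u => s(v, u)) := by
  ext e
  simp only [mem_filter, mem_image, mem_univ, true_and, SimpleGraph.mem_edgeFinset]
  constructor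
  · rintro ⟨he, hmono, hv⟩
    obtain ⟨u, rfl⟩ := Sym2.mem_iff_exists.1 hv
    exact ⟨u, ⟨he, hmono u (Sym2.mem_mk_right v u) v hv⟩, rfl⟩
  · rintro ⟨u, ⟨hadj, hc⟩, rfl⟩
    refine ⟨hadj, ?_, Sym2.mem_mk_left v u⟩
    simp only [IsMonochromatic, Sym2.mem_iff]
    rintro a (rfl | rfl) b (rfl | rfl) <;> simp [hc]

theorem card_filter_monochromatic_mem (v : V) :
    #{e ∈ G.edgeFinset | IsMonochromatic c e ∧ v ∈ e} = sameColorDeg G c v := by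
  rw [filter_monochromatic_mem_eq_image, card_image_of_injective _ fun _ _ => Sym2.congr_right.1,
    sameColorDeg]

theorem Phi_eq_card : Phi G c = #{e ∈ G.edgeFinset | IsMonochromatic c e} := by
  unfold Phi IsMonochromatic
  convert rfl

theorem Phi_le_numEdges : Phi G c ≤ numEdges G :=
  calc Phi G c ≤ #G.edgeFinset := Phi_eq_card (c := c) ▸ card_le_card (filter_subset _ _)
    _ = numEdges G := by
      unfold numEdges
      congr 1
      ext e
      simp

theorem frac_eq (v : V) :
    frac G c v = (sameColorDeg G c v + 1 : ℝ) / (deg G v + 1) := by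
  have hN : closedNbhd G v = insert v ({u | G.Adj v u} : Finset V) := by
    ext u; simp [closedNbhd]
  have hsame : (closedNbhd G v).filter (fun u => c u = c v)
      = insert v ({u | G.Adj v u ∧ c u = c v} : Finset V) := by
    ext u; simp only [closedNbhd, mem_filter, mem_univ, true_and, mem_insert]
    constructor
    · rintro ⟨rfl | hu, hc⟩ <;> simp_all
    · rintro (rfl | ⟨hu, hc⟩) <;> simp_all
  rw [frac, hsame, hN, card_insert_of_notMem (by simp), card_insert_of_notMem (by simp)]
  push_cast [sameColorDeg, deg]
  rfl

theorem frac_mem_Icc (v : V) : frac G c v ∈ Set.Icc 0 1 := by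
  rw [frac_eq]
  have := sameColorDeg_le_deg (G := G) (c := c) v
  exact ⟨by positivity, (div_le_one (by positivity)).2 (by exact_mod_cast Nat.succ_le_succ this)⟩

variable {v w : V}

theorem deg_eq_sameColorDeg_add_sameColorDeg_swapColor_left (hvw : c v ≠ c w) :
    deg G v = sameColorDeg G c v + sameColorDeg G (swapColor c v w) v +
      if G.Adj v w then 1 else 0 := by
  have hother : ({u | G.Adj v u ∧ swapColor c v w u = swapColor c v w v} : Finset V)
      = ({u | G.Adj v u ∧ c u ≠ c v} : Finset V).erase w := by
    ext u
    rcases eq_or_ne u w with rfl | huw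
    · simpa using fun _ => hvw
    rcases eq_or_ne u v with rfl | huv
    · simp
    simp only [swapColor_apply_left, swapColor_apply_of_ne_of_ne huv huw, mem_erase,
      mem_filter, mem_univ, true_and]
    cases hu : c u <;> cases hv : c v <;> cases hw : c w <;> simp_all
  have hsplit : deg G v = #{u | G.Adj v u ∧ c u = c v} + #{u | G.Adj v u ∧ c u ≠ c v} := by
    rw [deg, ← card_filter_add_card_filter_not (fun u => c u = c v), filter_filter,
      filter_filter]
  rw [hsplit, sameColorDeg, sameColorDeg, hother]
  split_ifs with hadj
  · rw [← card_erase_add_one (s := ({u | G.Adj v u ∧ c u ≠ c v} : Finset V)) (a := w)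
      (by simp [hadj, Ne.symm hvw]), add_assoc]
  · rw [erase_eq_of_notMem (by simp [hadj]), add_zero]

theorem deg_eq_sameColorDeg_add_sameColorDeg_swapColor_right (hvw : c v ≠ c w) :
    deg G w = sameColorDeg G c w + sameColorDeg G (swapColor c v w) w +
      if G.Adj v w then 1 else 0 := by
  rw [swapColor_comm, G.adj_comm]
  exact deg_eq_sameColorDeg_add_sameColorDeg_swapColor_left hvw.symm

theorem Phi_eq_add_sameColorDeg (hvw : c v ≠ c w) :
    Phi G c = #{e ∈ G.edgeFinset | IsMonochromatic c e ∧ v ∉ e ∧ w ∉ e}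
      + sameColorDeg G c v + sameColorDeg G c w := by
  have hsplit_v := card_filter_add_card_filter_not
    (s := {e ∈ G.edgeFinset | IsMonochromatic c e}) (fun e => v ∈ e)
  have hsplit_w := card_filter_add_card_filter_not
    (s := {e ∈ G.edgeFinset | IsMonochromatic c e ∧ v ∉ e}) (fun e => w ∈ e)
  have hw : {e ∈ G.edgeFinset | (IsMonochromatic c e ∧ v ∉ e) ∧ w ∈ e}
      = {e ∈ G.edgeFinset | IsMonochromatic c e ∧ w ∈ e} :=
    filter_congr fun e _ => ⟨fun h => ⟨h.1.1, h.2⟩,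
      fun h => ⟨⟨h.1, fun hv => hvw (h.1 v hv w h.2)⟩, h.2⟩⟩
  simp only [filter_filter, and_assoc] at hsplit_v hsplit_w hw
  rw [hw, card_filter_monochromatic_mem] at hsplit_w
  rw [Phi_eq_card, ← hsplit_v, ← hsplit_w, card_filter_monochromatic_mem]
  ring

theorem Phi_add_sameColorDeg_swapColor (hvw : c v ≠ c w) :
    Phi G c + sameColorDeg G (swapColor c v w) v + sameColorDeg G (swapColor c v w) w
      = Phi G (swapColor c v w) + sameColorDeg G c v + sameColorDeg G c w := by
  have hvw' : swapColor c v w v ≠ swapColor c v w w := by simpa using hvw.symm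
  have hrest : {e ∈ G.edgeFinset | IsMonochromatic (swapColor c v w) e ∧ v ∉ e ∧ w ∉ e}
      = {e ∈ G.edgeFinset | IsMonochromatic c e ∧ v ∉ e ∧ w ∉ e} := by
    refine filter_congr fun e _ => and_congr_left fun ⟨hv, hw⟩ => ?_
    have hagree : ∀ u ∈ e, swapColor c v w u = c u := fun u hu =>
      swapColor_apply_of_ne_of_ne (ne_of_mem_of_not_mem hu hv) (ne_of_mem_of_not_mem hu hw)
    simp +contextual only [IsMonochromatic, hagree]
  rw [Phi_eq_add_sameColorDeg hvw, Phi_eq_add_sameColorDeg hvw', hrest]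
  ring

theorem one_sub_frac_le_frac_swapColor (hvw : c v ≠ c w) :
    1 - frac G c v ≤ frac G (swapColor c v w) v := by
  have hdeg := deg_eq_sameColorDeg_add_sameColorDeg_swapColor_left (G := G) hvw
  have hle : deg G v ≤ sameColorDeg G c v + sameColorDeg G (swapColor c v w) v + 1 := by
    split_ifs at hdeg <;> omega
  rw [frac_eq, frac_eq, one_sub_div (by positivity), div_le_div_iff_of_pos_right (by positivity)]
  have : (deg G v : ℝ) ≤ sameColorDeg G c v + sameColorDeg G (swapColor c v w) v + 1 := by
    exact_mod_cast hle
  linarith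

theorem Phi_swapColor_add_one_le_of_frac_lt (hreg : maxDeg G ≤ minDeg G + 1)
    (hvw : c v ≠ c w) (h : frac G (swapColor c v w) w < frac G c v) :
    Phi G (swapColor c v w) + 1 ≤ Phi G c := by
  have hPhi := Phi_add_sameColorDeg_swapColor (G := G) hvw
  have hdv := deg_eq_sameColorDeg_add_sameColorDeg_swapColor_left (G := G) hvw
  have hdw := deg_eq_sameColorDeg_add_sameColorDeg_swapColor_right (G := G) hvw
  have hcross : (sameColorDeg G (swapColor c v w) w + 1) * (deg G v + 1)
      < (sameColorDeg G c v + 1) * (deg G w + 1) := by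
    rw [frac_eq, frac_eq, div_lt_div_iff₀ (by positivity) (by positivity)] at h
    exact_mod_cast h
  -- `Φ c - Φ c'` equals `2 (s_v - s'_w) + deg w - deg v` (`s`, `s'`: like neighbours before
  -- and after), and `hcross` gives `s'_w < s_v`, or `s'_w ≤ s_v` when `deg w = deg v + 1`.
  have hdeg_v := deg_le_deg_add_one hreg v w
  have hdeg_w := deg_le_deg_add_one hreg w v
  rcases le_or_gt (deg G w) (deg G v) with hle | hlt
  · have := Nat.lt_of_mul_lt_mul_of_le hcross (by omega)
    split_ifs at hdv hdw <;> omega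
  · have := Nat.le_of_mul_lt_mul_of_le_succ hcross (by omega)
      (by have := sameColorDeg_le_deg (G := G) (c := c) v; omega)
    split_ifs at hdv hdw <;> omega

theorem Phi_swapColor_add_one_le {p : ℝ → ℝ} {Λ : ℝ} (hp : IsSinglePeaked p Λ) (hΛ : Λ ≤ 1 / 2)
    (hreg : maxDeg G ≤ minDeg G + 1) (h : ProfitableSwap G p c v w) :
    Phi G (swapColor c v w) + 1 ≤ Phi G c := by
  obtain ⟨hvw, hv, hw⟩ := h
  rcases hp.lt_or_lt_one_sub_of_lt hΛ (frac_mem_Icc v) (frac_mem_Icc w) hv with hv | hv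
  · exact Phi_swapColor_add_one_le_of_frac_lt hreg hvw hv
  rcases hp.lt_or_lt_one_sub_of_lt hΛ (frac_mem_Icc w) (frac_mem_Icc v) hw with hw | hw
  · rw [swapColor_comm] at hw ⊢
    exact Phi_swapColor_add_one_le_of_frac_lt hreg hvw.symm hw
  · have hv' := one_sub_frac_le_frac_swapColor (G := G) hvw
    have hw' := one_sub_frac_le_frac_swapColor (G := G) hvw.symm
    rw [← swapColor_comm] at hw'
    linarith

end Counting

/-- On almost regular graphs with peak `Λ ≤ 1/2`: every profitable swap
decreases the number `Φ` of monochromatic edges by at least `1`; consequently every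
sequence of profitable swaps has length at most `m = |E|`, and from every strategy
profile some sequence of at most `m` profitable swaps ends in a swap equilibrium. -/
theorem finite_improvement_property_almost_regular
    {V : Type*} [Fintype V] [DecidableEq V] (G : SimpleGraph V) (b : ℕ) (Λ : ℝ) (p : ℝ → ℝ)
    (hgame : IsGame G b Λ p) (hΛ : Λ ≤ 1 / 2)
    (hreg : maxDeg G ≤ minDeg G + 1) :
    (∀ c : V → Bool, IsProfile c b → ∀ v w, ProfitableSwap G p c v w →
        Phi G (swapColor c v w) + 1 ≤ Phi G c) ∧
    (∀ (L : ℕ) (s : ℕ → V → Bool), IsProfile (s 0) b →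
        (∀ t < L, ∃ v w, ProfitableSwap G p (s t) v w ∧ s (t + 1) = swapColor (s t) v w) →
        L ≤ numEdges G) ∧
    (∀ c : V → Bool, IsProfile c b →
        ∃ (L : ℕ) (s : ℕ → V → Bool), s 0 = c ∧ L ≤ numEdges G ∧
          (∀ t < L, ∃ v w, ProfitableSwap G p (s t) v w ∧ s (t + 1) = swapColor (s t) v w) ∧
          IsSwapEquilibrium G p (s L)) := by
  have hdrop : ∀ c c' : V → Bool, (∃ v w, ProfitableSwap G p c v w ∧ c' = swapColor c v w) →
      Phi G c' + 1 ≤ Phi G c := by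
    rintro c _ ⟨v, w, hswap, rfl⟩
    exact Phi_swapColor_add_one_le hgame.singlePeaked hΛ hreg hswap
  refine ⟨fun c _ v w hswap => hdrop c _ ⟨v, w, hswap, rfl⟩, fun L s _ hs => ?_, fun c _ => ?_⟩
  · exact (chain_length_le_of_potential hdrop hs).trans Phi_le_numEdges
  · obtain ⟨L, s, hs0, hL, hs, hterm⟩ := exists_chain_to_terminal_of_potential hdrop c
    exact ⟨L, s, hs0, hL.trans Phi_le_numEdges, hs, fun v w hswap => hterm _ ⟨v, w, hswap, rfl⟩⟩

end SwapSchelling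
end

section
/- For peak Λ = 1/2, there exists a swap Schelling game (G,b,1/2) admitting an improving response cycle, i.e., a finite sequence of strategy profiles σ_0, σ_1, …, σ_k with k ≥ 1 and σ_k = σ_0 such that for every t < k, the profile σ_{t+1} is obtained from σ_t by a profitable swap of two agents. Consequently, these games admit no ordinal potential function. -/
open Finset

namespace SwapSchelling

variable {V : Type*} [Fintype V] [DecidableEq V]

/-!
On a nine-node graph there are six profiles with four blue agents, each obtained from the
previous one by a profitable swap, the sixth swap returning to the first profile. An ordinal
potential would strictly increase around this cycle, which is absurd. For `Λ = 1/2` a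
single-peaked utility is a strictly increasing function of the minority fraction `min f (1 - f)`,
so profitability of each swap reduces to an inequality between natural numbers, checked by
`decide`.
-/

namespace IsSinglePeaked

variable {p : ℝ → ℝ} {Λ x y : ℝ}

theorem apply_eq_apply_min (hp : IsSinglePeaked p Λ) (hx : x ∈ Set.Icc 0 1) :
    p x = p (min x (Λ * (1 - x) / (1 - Λ))) := by
  obtain ⟨hΛ0, hΛ1⟩ := hp.peak_mem
  rcases le_total x Λ with hxΛ | hΛx
  · rw [min_eq_left]
    rw [le_div_iff₀ (by linarith)]
    nlinarith
  · rw [min_eq_right, hp.symm x ⟨hΛx, hx.2⟩]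
    rw [div_le_iff₀ (by linarith)]
    nlinarith

theorem min_mem_Icc (hp : IsSinglePeaked p Λ) (hx : x ∈ Set.Icc 0 1) :
    min x (Λ * (1 - x) / (1 - Λ)) ∈ Set.Icc 0 Λ := by
  obtain ⟨hΛ0, hΛ1⟩ := hp.peak_mem
  refine ⟨le_min hx.1 (div_nonneg (by nlinarith [hx.2]) (by linarith)), ?_⟩
  rcases le_total x Λ with hxΛ | hΛx
  · exact min_le_of_left_le hxΛ
  · refine min_le_of_right_le ?_
    rw [div_le_iff₀ (by linarith)]
    nlinarith

theorem apply_lt_apply (hp : IsSinglePeaked p Λ) (hx : x ∈ Set.Icc 0 1) (hy : y ∈ Set.Icc 0 1)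
    (h : min x (Λ * (1 - x) / (1 - Λ)) < min y (Λ * (1 - y) / (1 - Λ))) : p x < p y := by
  rw [hp.apply_eq_apply_min hx, hp.apply_eq_apply_min hy]
  exact hp.strictMonoOn (hp.min_mem_Icc hx) (hp.min_mem_Icc hy) h

theorem apply_div_lt_apply_div (hp : IsSinglePeaked p (1 / 2)) {a d a' d' : ℕ}
    (ha : a ≤ d) (hd : 0 < d) (ha' : a' ≤ d') (hd' : 0 < d')
    (h : min a (d - a) * d' < min a' (d' - a') * d) :
    p (a / d) < p (a' / d') := by
  have hmem {a d : ℕ} (ha : a ≤ d) (hd : 0 < d) : (a / d : ℝ) ∈ Set.Icc 0 1 :=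
    ⟨by positivity, div_le_one_of_le₀ (by exact_mod_cast ha) (by positivity)⟩
  have hfold {a d : ℕ} (ha : a ≤ d) (hd : 0 < d) :
      min (a / d : ℝ) (1 / 2 * (1 - a / d) / (1 - 1 / 2)) = (min a (d - a) : ℕ) / d := by
    have hd : (d : ℝ) ≠ 0 := by positivity
    rw [Nat.cast_min, Nat.cast_sub ha, ← min_div_div_right (by positivity), sub_div, div_self hd]
    norm_num
  refine hp.apply_lt_apply (hmem ha hd) (hmem ha' hd') ?_
  rw [hfold ha hd, hfold ha' hd', div_lt_div_iff₀ (by positivity) (by positivity)]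
  exact_mod_cast h

end IsSinglePeaked

section Counting

variable (G : SimpleGraph V) [DecidableRel G.Adj] (c : V → Bool) (v : V)

theorem closedNbhd_eq_filter : closedNbhd G v = univ.filter (fun u => u = v ∨ G.Adj v u) := by
  ext u
  simp [closedNbhd]

def sameColorCount : ℕ := ((univ.filter (fun u => u = v ∨ G.Adj v u)).filter (c · = c v)).card

def closedNbhdCard : ℕ := (univ.filter (fun u => u = v ∨ G.Adj v u)).card

def minorityCount : ℕ := min (sameColorCount G c v) (closedNbhdCard G v - sameColorCount G c v)

theorem frac_eq_div : frac G c v = (sameColorCount G c v : ℝ) / closedNbhdCard G v := by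
  rw [frac, closedNbhd_eq_filter, Finset.filter_congr_decidable, sameColorCount, closedNbhdCard]

theorem sameColorCount_le : sameColorCount G c v ≤ closedNbhdCard G v :=
  card_filter_le _ _

theorem closedNbhdCard_pos : 0 < closedNbhdCard G v :=
  card_pos.mpr ⟨v, mem_filter.mpr ⟨mem_univ v, Or.inl rfl⟩⟩

variable {p : ℝ → ℝ} {c' : V → Bool} {v' : V}

theorem IsSinglePeaked.apply_frac_lt_apply_frac (hp : IsSinglePeaked p (1 / 2))
    (h : minorityCount G c v * closedNbhdCard G v' < minorityCount G c' v' * closedNbhdCard G v) :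
    p (frac G c v) < p (frac G c' v') := by
  rw [frac_eq_div, frac_eq_div]
  exact hp.apply_div_lt_apply_div (sameColorCount_le G c v) (closedNbhdCard_pos G v)
    (sameColorCount_le G c' v') (closedNbhdCard_pos G v') h

end Counting

/-- For `Λ = 1/2` the utility is strictly increasing in the minority fraction `min f (1 - f)`, so
this decidable condition (fractions compared by cross-multiplication) implies `ProfitableSwap`. -/
def BalancingSwap (G : SimpleGraph V) [DecidableRel G.Adj] (c : V → Bool) (v w : V) : Prop :=
  c v ≠ c w ∧
    minorityCount G c v * closedNbhdCard G w <
      minorityCount G (swapColor c v w) w * closedNbhdCard G v ∧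
    minorityCount G c w * closedNbhdCard G v <
      minorityCount G (swapColor c v w) v * closedNbhdCard G w

instance (G : SimpleGraph V) [DecidableRel G.Adj] (c : V → Bool) (v w : V) :
    Decidable (BalancingSwap G c v w) := by
  unfold BalancingSwap; infer_instance

theorem BalancingSwap.profitableSwap {G : SimpleGraph V} [DecidableRel G.Adj] {p : ℝ → ℝ}
    {c : V → Bool} {v w : V} (h : BalancingSwap G c v w) (hp : IsSinglePeaked p (1 / 2)) :
    ProfitableSwap G p c v w :=
  ⟨h.1, hp.apply_frac_lt_apply_frac G c v h.2.1, hp.apply_frac_lt_apply_frac G c w h.2.2⟩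

theorem IsProfile.swapColor {c : V → Bool} {b : ℕ} (h : IsProfile c b) (v w : V) :
    IsProfile (swapColor c v w) b := by
  rw [IsProfile, ← h]
  exact card_equiv (Equiv.swap v w) fun u => by simp only [mem_filter, mem_univ, true_and]; rfl

theorem not_exists_potential_of_improving_cycle {G : SimpleGraph V} {p : ℝ → ℝ} {b k : ℕ}
    {s : ℕ → V → Bool} (hk : 1 ≤ k) (hs₀ : IsProfile (s 0) b) (hsk : s k = s 0)
    (hstep : ∀ t < k, ∃ v w, ProfitableSwap G p (s t) v w ∧ s (t + 1) = swapColor (s t) v w) :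
    ¬ ∃ F : (V → Bool) → ℝ, ∀ (c : V → Bool) (v w : V),
      IsProfile c b → ProfitableSwap G p c v w → F c < F (swapColor c v w) := by
  rintro ⟨F, hF⟩
  have hincr : ∀ t < k, IsProfile (s t) b →
      IsProfile (s (t + 1)) b ∧ F (s t) < F (s (t + 1)) := by
    intro t ht hst
    obtain ⟨v, w, hvw, hnext⟩ := hstep t ht
    rw [hnext]
    exact ⟨hst.swapColor v w, hF _ v w hst hvw⟩
  have hchain : ∀ t, t + 1 ≤ k → IsProfile (s (t + 1)) b ∧ F (s 0) < F (s (t + 1)) := by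
    intro t
    induction t with
    | zero => exact fun h => hincr 0 h hs₀
    | succ t ih =>
      intro ht
      obtain ⟨hprof, hlt⟩ := ih (by omega)
      obtain ⟨hprof', hlt'⟩ := hincr (t + 1) ht hprof
      exact ⟨hprof', hlt.trans hlt'⟩
  have := (hchain (k - 1) (by omega)).2
  rw [Nat.sub_add_cancel hk, hsk] at this
  exact lt_irrefl _ this

section Example

def exampleEdges : List (Fin 9 × Fin 9) :=
  [(0, 1), (1, 2), (2, 6), (2, 7), (2, 8), (3, 4), (3, 5), (3, 7), (3, 8), (4, 7)]

def exampleGraph : SimpleGraph (Fin 9) := SimpleGraph.fromRel fun i j => (i, j) ∈ exampleEdges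

instance : DecidableRel exampleGraph.Adj := fun i j =>
  inferInstanceAs (Decidable (i ≠ j ∧ ((i, j) ∈ exampleEdges ∨ (j, i) ∈ exampleEdges)))

theorem exampleGraph_connected : exampleGraph.Connected :=
  (SimpleGraph.connected_iff _).mpr ⟨by decide, inferInstance⟩

def exampleSwap (t : ℕ) : Fin 9 × Fin 9 := [(3, 6), (0, 2), (1, 5)].getD (t % 3) (0, 0)

def exampleProfile : ℕ → Fin 9 → Bool
  | 0 => fun v => decide (v ∈ [2, 5, 6, 7])
  | t + 1 => swapColor (exampleProfile t) (exampleSwap t).1 (exampleSwap t).2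

theorem isProfile_exampleProfile_zero : IsProfile (exampleProfile 0) 4 := by
  unfold IsProfile; decide

theorem exampleProfile_six : exampleProfile 6 = exampleProfile 0 := by
  decide

theorem balancingSwap_exampleSwap :
    ∀ t < 6,
      BalancingSwap exampleGraph (exampleProfile t) (exampleSwap t).1 (exampleSwap t).2 := by
  decide

end Example

/-- For peak `Λ = 1/2`, there exists a swap Schelling game admitting an
improving response cycle; consequently, it admits no ordinal potential function. -/
theorem exists_improving_response_cycle
    (p : ℝ → ℝ) (hp : IsSinglePeaked p (1 / 2)) :
    ∃ (n : ℕ) (G : SimpleGraph (Fin n)) (b : ℕ),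
      IsGame G b (1 / 2) p ∧
      (∃ (k : ℕ) (s : ℕ → Fin n → Bool), 1 ≤ k ∧ IsProfile (s 0) b ∧ s k = s 0 ∧
        ∀ t < k, ∃ v w, ProfitableSwap G p (s t) v w ∧ s (t + 1) = swapColor (s t) v w) ∧
      ¬ ∃ F : (Fin n → Bool) → ℝ, ∀ (c : Fin n → Bool) (v w : Fin n),
          IsProfile c b → ProfitableSwap G p c v w → F c < F (swapColor c v w) := by
  have hstep : ∀ t < 6, ∃ v w, ProfitableSwap exampleGraph p (exampleProfile t) v w ∧
      exampleProfile (t + 1) = swapColor (exampleProfile t) v w :=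
    fun t ht => ⟨_, _, (balancingSwap_exampleSwap t ht).profitableSwap hp, rfl⟩
  exact ⟨9, exampleGraph, 4, ⟨exampleGraph_connected, by norm_num, by simp, hp⟩,
    ⟨6, exampleProfile, by norm_num, isProfile_exampleProfile_zero, exampleProfile_six, hstep⟩,
    not_exists_potential_of_improving_cycle (by norm_num) isProfile_exampleProfile_zero
      exampleProfile_six hstep⟩

end SwapSchelling
end
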